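/- arXiv:1703.06485 — 4 statements merged into one kernel-verified Lean document; each statement's English description precedes it below -/
import Mathlib

section
/- Let a < b be real numbers, let c_1, …, c_K : [a,b] → ℝ^n be integrable functions, let α = (α_1, …, α_K) be a vector of nonnegative reals with α_1 + ⋯ + α_K = 1, and let ε > 0. Then there exists a measurable function g : [a,b] → ℝ^n with g(t) ∈ {c_1(t), …, c_K(t)} for almost every t ∈ [a,b], such that for every t ∈ [a,b], ‖∫_a^t (g(τ) − Σ_{k=1}^K α_k c_k(τ)) dτ‖ < ε. -/
/-!
Let `0 = s₀ ≤ s₁ ≤ ⋯ ≤ s_K = 1` with `s_{k+1} - s_k = α_k` and, for a small period `Δ`, let `g`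
use `c_k` at the times `τ` with `fract (τ / Δ) ∈ [s_k, s_{k+1})`. Then `g - ∑ α_k c_k = ∑ w_k c_k`
with bounded `Δ`-periodic weights `w_k` of mean zero. Against a continuous `φ`, such a weight
integrates over one period to at most `Δ` times the oscillation of `φ` over a period, so
`∫_a^t w φ → 0` uniformly in `t` as `Δ → 0`; approximating each `c_k` in `L¹` by a continuous
function gives the same for `∫_a^t w c_k`.
-/

open MeasureTheory Set Function Filter Topology

section

variable {E : Type*} [NormedAddCommGroup E]

theorem MeasureTheory.IntegrableOn.intervalIntegrable_of_mem_Icc {f : ℝ → E} {a b t : ℝ}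
    (hf : IntegrableOn f (Icc a b)) (ht : t ∈ Icc a b) : IntervalIntegrable f volume a t :=
  (intervalIntegrable_iff_integrableOn_Icc_of_le ht.1).2 (hf.mono_set (Icc_subset_Icc_right ht.2))

variable [NormedSpace ℝ E] {w : ℝ → ℝ} {φ : ℝ → E} {Δ C η : ℝ}

theorem IntervalIntegrable.bdd_smul {f : ℝ → E} {p q : ℝ}
    (hf : IntervalIntegrable f volume p q) (hw : AEStronglyMeasurable w volume)
    (hwC : ∀ x, ‖w x‖ ≤ C) : IntervalIntegrable (fun x => w x • f x) volume p q :=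
  ⟨hf.1.bdd_smul C hw.restrict (ae_of_all _ hwC), hf.2.bdd_smul C hw.restrict (ae_of_all _ hwC)⟩

theorem norm_integral_smul_sub_le {f : ℝ → E} {a b t : ℝ} (hf : IntegrableOn f (Icc a b))
    (hφ : IntegrableOn φ (Icc a b)) (hwm : AEStronglyMeasurable w volume) (hwC : ∀ x, ‖w x‖ ≤ C)
    (ht : t ∈ Icc a b) :
    ‖(∫ x in a..t, w x • f x) - ∫ x in a..t, w x • φ x‖ ≤ C * ∫ x in Icc a b, ‖f x - φ x‖ := by
  have hdiff : IntegrableOn (fun x => C * ‖f x - φ x‖) (Icc a b) := ((hf.sub hφ).norm).const_mul C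
  rw [← intervalIntegral.integral_sub ((hf.intervalIntegrable_of_mem_Icc ht).bdd_smul hwm hwC)
    ((hφ.intervalIntegrable_of_mem_Icc ht).bdd_smul hwm hwC), intervalIntegral.integral_of_le ht.1,
    ← integral_const_mul]
  calc ‖∫ x in Ioc a t, (w x • f x - w x • φ x)‖ ≤ ∫ x in Ioc a t, C * ‖f x - φ x‖ :=
        norm_integral_le_of_norm_le (hdiff.mono_set (Ioc_subset_Icc_self.trans
          (Icc_subset_Icc_right ht.2))) (ae_of_all _ fun x => by
            rw [← smul_sub, norm_smul]
            exact mul_le_mul_of_nonneg_right (hwC x) (norm_nonneg _))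
    _ ≤ ∫ x in Icc a b, C * ‖f x - φ x‖ :=
        setIntegral_mono_set hdiff (ae_of_all _ fun x => mul_nonneg
          ((norm_nonneg _).trans (hwC 0)) (norm_nonneg _))
          (Ioc_subset_Icc_self.trans (Icc_subset_Icc_right ht.2)).eventuallyLE

variable [CompleteSpace E]

theorem norm_integral_smul_period_le (hwm : AEStronglyMeasurable w volume)
    (hwC : ∀ x, ‖w x‖ ≤ C) (hw : Periodic w Δ) (hw0 : ∫ x in 0..Δ, w x = 0)
    (hφ : Continuous φ) (hΔ : 0 ≤ Δ) {u : ℝ} (hφη : ∀ x ∈ Icc u (u + Δ), ‖φ x - φ u‖ ≤ η) :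
    ‖∫ x in u..u + Δ, w x • φ x‖ ≤ C * η * Δ := by
  have hC : 0 ≤ C := (norm_nonneg _).trans (hwC 0)
  have hshift : ∫ x in u..u + Δ, w x • φ x = ∫ x in u..u + Δ, w x • (φ x - φ u) := by
    have hmean : ∫ x in u..u + Δ, w x = 0 := by rw [hw.intervalIntegral_add_eq u 0, zero_add, hw0]
    simp_rw [smul_sub]
    rw [intervalIntegral.integral_sub ((hφ.intervalIntegrable _ _).bdd_smul hwm hwC)
      (intervalIntegrable_const.bdd_smul hwm hwC), intervalIntegral.integral_smul_const, hmean,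
      zero_smul, sub_zero]
  rw [hshift]
  have hbound : ∀ x ∈ uIoc u (u + Δ), ‖w x • (φ x - φ u)‖ ≤ C * η := fun x hx => by
    rw [uIoc_of_le (by linarith)] at hx
    rw [norm_smul]
    exact mul_le_mul (hwC x) (hφη x (Ioc_subset_Icc_self hx)) (norm_nonneg _) hC
  simpa [abs_of_nonneg hΔ] using intervalIntegral.norm_integral_le_of_norm_le_const hbound

theorem norm_integral_smul_le_of_periodic (hwm : AEStronglyMeasurable w volume)
    (hwC : ∀ x, ‖w x‖ ≤ C) (hw : Periodic w Δ) (hw0 : ∫ x in 0..Δ, w x = 0)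
    (hφ : Continuous φ) {M : ℝ} (hφM : ∀ x, ‖φ x‖ ≤ M)
    (hφη : ∀ x y, |x - y| ≤ Δ → ‖φ x - φ y‖ ≤ η) (hΔ : 0 < Δ) {a t : ℝ} (hat : a ≤ t) :
    ‖∫ x in a..t, w x • φ x‖ ≤ C * (η * (t - a) + M * Δ) := by
  have hC : 0 ≤ C := (norm_nonneg _).trans (hwC 0)
  have hM : 0 ≤ M := (norm_nonneg _).trans (hφM 0)
  have hη : 0 ≤ η := by simpa using hφη 0 0 (by simpa using hΔ.le)
  set u : ℕ → ℝ := fun j => a + j * Δ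
  set i := ⌊(t - a) / Δ⌋₊
  have hiΔ : i * Δ ≤ t - a := (le_div_iff₀ hΔ).1 (Nat.floor_le (div_nonneg (by linarith) hΔ.le))
  have htΔ : t - a < (i + 1) * Δ := (div_lt_iff₀ hΔ).1 (Nat.lt_floor_add_one _)
  have hint : ∀ p q, IntervalIntegrable (fun x => w x • φ x) volume p q :=
    fun p q => (hφ.intervalIntegrable p q).bdd_smul hwm hwC
  have hsplit : ∫ x in a..t, w x • φ x =
      (∑ j ∈ Finset.range i, ∫ x in u j..u (j + 1), w x • φ x) + ∫ x in u i..t, w x • φ x := by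
    rw [intervalIntegral.sum_integral_adjacent_intervals fun j _ => hint _ _,
      intervalIntegral.integral_add_adjacent_intervals (hint _ _) (hint _ _)]
    simp [u]
  have hperiod : ∀ j, ‖∫ x in u j..u (j + 1), w x • φ x‖ ≤ C * η * Δ := fun j => by
    have hu : u (j + 1) = u j + Δ := by simp only [u]; push_cast; ring
    refine hu ▸ norm_integral_smul_period_le hwm hwC hw hw0 hφ hΔ.le fun x hx => hφη _ _ ?_
    rw [abs_of_nonneg (by linarith [hx.1])]
    linarith [hx.2]
  have hlast : ‖∫ x in u i..t, w x • φ x‖ ≤ C * M * Δ := by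
    have hbound : ∀ x ∈ uIoc (u i) t, ‖w x • φ x‖ ≤ C * M := fun x _ => by
      rw [norm_smul]; exact mul_le_mul (hwC x) (hφM x) (norm_nonneg _) hC
    refine (intervalIntegral.norm_integral_le_of_norm_le_const hbound).trans ?_
    have hti : |t - u i| ≤ Δ := abs_le.2 ⟨by linarith, by simp only [u]; linarith⟩
    nlinarith [mul_le_mul_of_nonneg_left hti (mul_nonneg hC hM)]
  rw [hsplit]
  calc ‖(∑ j ∈ Finset.range i, ∫ x in u j..u (j + 1), w x • φ x) + ∫ x in u i..t, w x • φ x‖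
      ≤ (∑ _j ∈ Finset.range i, C * η * Δ) + C * M * Δ :=
        (norm_add_le _ _).trans (add_le_add ((norm_sum_le _ _).trans
          (Finset.sum_le_sum fun j _ => hperiod j)) hlast)
    _ = C * η * (i * Δ) + C * M * Δ := by
        rw [Finset.sum_const, Finset.card_range, nsmul_eq_mul]; ring
    _ ≤ C * (η * (t - a) + M * Δ) := by
        nlinarith [mul_le_mul_of_nonneg_left hiΔ (mul_nonneg hC hη)]

theorem eventually_norm_integral_smul_lt {f : ℝ → E} {a b : ℝ} (hf : IntegrableOn f (Icc a b))
    {ε : ℝ} (hε : 0 < ε) :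
    ∀ᶠ Δ in 𝓝[>] 0, ∀ w : ℝ → ℝ, AEStronglyMeasurable w volume → (∀ x, ‖w x‖ ≤ 1) →
      Periodic w Δ → ∫ x in 0..Δ, w x = 0 →
      ∀ t ∈ Icc a b, ‖∫ x in a..t, w x • f x‖ < ε := by
  have hε4 : 0 < ε / 4 := by positivity
  obtain ⟨φ, hφs, hφf, hφc, -⟩ := hf.exists_hasCompactSupport_integral_sub_le hε4
  obtain ⟨M, hM⟩ := hφs.exists_bound_of_continuous hφc
  have hM0 : 0 ≤ M := (norm_nonneg _).trans (hM 0)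
  obtain ⟨η, hη, hηε⟩ := exists_pos_mul_lt hε4 (b - a)
  obtain ⟨d, hd, hφd⟩ := Metric.uniformContinuous_iff.1
    (hφs.uniformContinuous_of_continuous hφc) η hη
  obtain ⟨δ, hδ, hMδ⟩ := exists_pos_mul_lt hε4 M
  filter_upwards [Ioo_mem_nhdsGT (lt_min hd hδ)] with Δ ⟨hΔ, hΔd⟩ w hwm hw1 hwp hw0 t ht
  have hosc : ∀ x y, |x - y| ≤ Δ → ‖φ x - φ y‖ ≤ η := fun x y hxy => by
    rw [← dist_eq_norm]
    exact (hφd ((Real.dist_eq x y).trans_lt (hxy.trans_lt (hΔd.trans_le (min_le_left _ _))))).le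
  have happrox := norm_integral_smul_sub_le hf (hφc.integrableOn_Icc) hwm hw1 ht
  have hcont := norm_integral_smul_le_of_periodic hwm hw1 hwp hw0 hφc hM hosc hΔ ht.1
  have hMΔ : M * Δ ≤ M * δ := mul_le_mul_of_nonneg_left (hΔd.le.trans (min_le_right _ _)) hM0
  have hηt : η * (t - a) ≤ (b - a) * η := by nlinarith [ht.2]
  calc ‖∫ x in a..t, w x • f x‖
      ≤ ‖(∫ x in a..t, w x • f x) - ∫ x in a..t, w x • φ x‖ + ‖∫ x in a..t, w x • φ x‖ :=
        norm_le_norm_sub_add _ _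
    _ < ε := by linarith

end

theorem exists_lt_mem_Ico_succ {α : Type*} [LinearOrder α] (s : ℕ → α) {r : α} :
    ∀ {K : ℕ}, s 0 ≤ r → r < s K → ∃ j < K, r ∈ Ico (s j) (s (j + 1))
  | 0, h0, hK => absurd (h0.trans_lt hK) (lt_irrefl _)
  | K + 1, h0, hK => by
    by_cases hr : s K ≤ r
    · exact ⟨K, K.lt_succ_self, hr, hK⟩
    · obtain ⟨j, hj, hjr⟩ := exists_lt_mem_Ico_succ s h0 (not_le.1 hr)
      exact ⟨j, hj.trans K.lt_succ_self, hjr⟩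

theorem exists_measurable_partition_Ico_zero_one {K : ℕ} (α : Fin K → ℝ) (hα0 : ∀ k, 0 ≤ α k)
    (hα1 : ∑ k, α k = 1) :
    ∃ A : Fin K → Set ℝ, (∀ k, MeasurableSet (A k)) ∧ Pairwise (Disjoint on A) ∧
      ⋃ k, A k = Ico 0 1 ∧ ∀ k, volume.real (A k) = α k := by
  set β : ℕ → ℝ := fun i => if h : i < K then α ⟨i, h⟩ else 0
  set s : ℕ → ℝ := fun m => ∑ i ∈ Finset.range m, β i
  have hs : Monotone s := monotone_nat_of_le_succ fun m => by
    simp only [s, Finset.sum_range_succ, le_add_iff_nonneg_right, β]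
    split_ifs
    exacts [hα0 _, le_rfl]
  have hs0 : s 0 = 0 := Finset.sum_range_zero β
  have hsucc : ∀ k : Fin K, s (k + 1) = s k + α k := fun k => by
    simp [s, β, Finset.sum_range_succ]
  have hsK : s K = 1 := by
    simp only [s]
    rw [← Fin.sum_univ_eq_sum_range]
    simpa [β] using hα1
  refine ⟨fun k => Ico (s k) (s (k + 1)), fun k => measurableSet_Ico,
    hs.pairwise_disjoint_on_Ico_succ.comp_of_injective Fin.val_injective, ?_, fun k => ?_⟩
  · ext x
    simp only [mem_iUnion]
    constructor
    · rintro ⟨k, hk⟩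
      exact ⟨hs0 ▸ (hs (Nat.zero_le _)).trans hk.1, hk.2.trans_le (hsK ▸ hs k.isLt)⟩
    · rintro ⟨hx0, hx1⟩
      obtain ⟨j, hj, hjx⟩ := exists_lt_mem_Ico_succ s (hs0.symm ▸ hx0) (hsK.symm ▸ hx1)
      exact ⟨⟨j, hj⟩, hjx⟩
  · rw [Real.volume_real_Ico_of_le (hs (Nat.le_succ _)), hsucc]
    ring

noncomputable def chatteringWeight (A : Set ℝ) (Δ x : ℝ) : ℝ :=
  A.indicator 1 (Int.fract (x / Δ)) - volume.real A

section

variable {A : Set ℝ} {Δ : ℝ}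

theorem measurable_chatteringWeight (hA : MeasurableSet A) : Measurable (chatteringWeight A Δ) :=
  ((measurable_const.indicator hA).comp
    (measurable_fract.comp (measurable_id.div_const Δ))).sub_const _

theorem norm_chatteringWeight_le_one (hA : A ⊆ Ico 0 1) (x : ℝ) :
    ‖chatteringWeight A Δ x‖ ≤ 1 := by
  have h0 : 0 ≤ volume.real A := measureReal_nonneg
  have h1 : volume.real A ≤ 1 := by
    simpa using measureReal_mono hA (measure_Ico_lt_top (μ := volume)).ne
  rw [chatteringWeight, Real.norm_eq_abs, abs_le]
  by_cases hx : Int.fract (x / Δ) ∈ A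
  · rw [indicator_of_mem hx, Pi.one_apply]; constructor <;> linarith
  · rw [indicator_of_notMem hx]; constructor <;> linarith

theorem periodic_chatteringWeight : Periodic (chatteringWeight A Δ) Δ := fun x => by
  simpa [chatteringWeight] using congrArg (fun y => A.indicator 1 y - volume.real A)
    ((Int.fract_periodic ℝ).div_const Δ x)

theorem integral_indicator_fract (hA : MeasurableSet A) :
    ∫ x in (0 : ℝ)..1, A.indicator 1 (Int.fract x) = volume.real (A ∩ Ico 0 1) := by
  rw [intervalIntegral.integral_of_le zero_le_one, integral_Ioc_eq_integral_Ioo,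
    setIntegral_congr_fun measurableSet_Ioo fun x hx => by
      rw [Int.fract_eq_self.2 ⟨hx.1.le, hx.2⟩],
    ← integral_Ico_eq_integral_Ioo, integral_indicator_one hA, measureReal_restrict_apply hA]

theorem integral_chatteringWeight (hA : MeasurableSet A) (hA1 : A ⊆ Ico 0 1) (hΔ : Δ ≠ 0) :
    ∫ x in 0..Δ, chatteringWeight A Δ x = 0 := by
  have hint : IntervalIntegrable (fun y => A.indicator 1 (Int.fract y) : ℝ → ℝ) volume 0 1 := by
    refine (intervalIntegrable_const (c := (1 : ℝ))).mono_fun' ?_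
      (ae_of_all _ fun y => (norm_indicator_le_norm_self 1 _).trans_eq norm_one)
    exact ((measurable_const.indicator hA).comp measurable_fract).aestronglyMeasurable
  unfold chatteringWeight
  rw [intervalIntegral.integral_comp_div (fun y => A.indicator 1 (Int.fract y) - volume.real A) hΔ,
    zero_div, div_self hΔ, intervalIntegral.integral_sub hint intervalIntegrable_const,
    integral_indicator_fract hA, inter_eq_left.2 hA1]
  simp

end

noncomputable def chatteringCombination {ι E : Type*} [Fintype ι] [AddCommGroup E] [Module ℝ E]
    (A : ι → Set ℝ) (Δ : ℝ) (c : ι → ℝ → E) (τ : ℝ) : E :=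
  ∑ k, (A k).indicator (1 : ℝ → ℝ) (Int.fract (τ / Δ)) • c k τ

section

variable {ι E : Type*} [Fintype ι] {A : ι → Set ℝ} {Δ : ℝ}

theorem stronglyMeasurable_chatteringCombination [NormedAddCommGroup E] [NormedSpace ℝ E]
    {c : ι → ℝ → E} (hA : ∀ k, MeasurableSet (A k)) (hc : ∀ k, StronglyMeasurable (c k)) :
    StronglyMeasurable (chatteringCombination A Δ c) := by
  refine Finset.stronglyMeasurable_fun_sum _ fun k _ => StronglyMeasurable.smul ?_ (hc k)
  exact ((measurable_one.indicator (hA k)).comp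
    (measurable_fract.comp (measurable_id.div_const Δ))).stronglyMeasurable

variable [AddCommGroup E] [Module ℝ E]

theorem exists_chatteringCombination_eq (hA : Pairwise (Disjoint on A))
    (hAU : ⋃ k, A k = Ico 0 1) (c : ι → ℝ → E) (τ : ℝ) :
    ∃ k, chatteringCombination A Δ c τ = c k τ := by
  obtain ⟨k, hk⟩ := mem_iUnion.1 (hAU.ge ⟨Int.fract_nonneg (τ / Δ), Int.fract_lt_one _⟩)
  refine ⟨k, Finset.sum_eq_single k (fun j _ hj => ?_) (by simp) |>.trans ?_⟩
  · rw [indicator_of_notMem ((hA hj).notMem_of_mem_right hk), zero_smul]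
  · rw [indicator_of_mem hk, Pi.one_apply, one_smul]

theorem chatteringCombination_sub_sum_smul (c : ι → ℝ → E) (τ : ℝ) :
    chatteringCombination A Δ c τ - ∑ k, volume.real (A k) • c k τ =
      ∑ k, chatteringWeight (A k) Δ τ • c k τ := by
  simp only [chatteringCombination, chatteringWeight, sub_smul, Finset.sum_sub_distrib]

end

theorem exists_chatteringCombination_norm_integral_lt {E : Type*} [NormedAddCommGroup E]
    [NormedSpace ℝ E] [CompleteSpace E] {K : ℕ} {a b : ℝ} {c : Fin K → ℝ → E}
    (hc : ∀ k, IntegrableOn (c k) (Icc a b)) (α : Fin K → ℝ) (hα0 : ∀ k, 0 ≤ α k)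
    (hα1 : ∑ k, α k = 1) {ε : ℝ} (hε : 0 < ε) :
    ∃ (A : Fin K → Set ℝ) (Δ : ℝ), (∀ k, MeasurableSet (A k)) ∧ Pairwise (Disjoint on A) ∧
      ⋃ k, A k = Ico 0 1 ∧
      ∀ t ∈ Icc a b, ‖∫ τ in a..t, (chatteringCombination A Δ c τ - ∑ k, α k • c k τ)‖ < ε := by
  have hne : (Finset.univ : Finset (Fin K)).Nonempty :=
    Finset.nonempty_of_sum_ne_zero (hα1.trans_ne one_ne_zero)
  have hK : (0 : ℝ) < K := by simpa using hne.card_pos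
  obtain ⟨A, hAm, hAd, hAU, hAα⟩ := exists_measurable_partition_Ico_zero_one α hα0 hα1
  have hAsub : ∀ k, A k ⊆ Ico 0 1 := fun k => hAU ▸ subset_iUnion A k
  obtain ⟨Δ, hsmall, hΔ⟩ := ((eventually_all.2 fun k =>
    eventually_norm_integral_smul_lt (hc k) (div_pos hε hK)).and self_mem_nhdsWithin).exists
  have hw : ∀ k, AEStronglyMeasurable (chatteringWeight (A k) Δ) volume :=
    fun k => (measurable_chatteringWeight (hAm k)).aestronglyMeasurable
  refine ⟨A, Δ, hAm, hAd, hAU, fun t ht => ?_⟩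
  simp_rw [← hAα, chatteringCombination_sub_sum_smul]
  rw [intervalIntegral.integral_finsetSum fun k _ => ((hc k).intervalIntegrable_of_mem_Icc ht).bdd_smul
    (hw k) (norm_chatteringWeight_le_one (hAsub k))]
  calc ‖∑ k, ∫ τ in a..t, chatteringWeight (A k) Δ τ • c k τ‖
      ≤ ∑ k, ‖∫ τ in a..t, chatteringWeight (A k) Δ τ • c k τ‖ := norm_sum_le _ _
    _ < ∑ _k : Fin K, ε / K := Finset.sum_lt_sum_of_nonempty hne fun k _ =>
        hsmall k _ (hw k) (norm_chatteringWeight_le_one (hAsub k)) periodic_chatteringWeight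
          (integral_chatteringWeight (hAm k) (hAsub k) hΔ.ne') t ht
    _ = ε := by simp [field]

theorem chattering_lemma_existence_general
    (n K : ℕ) (a b : ℝ)
    (c : Fin K → ℝ → EuclideanSpace ℝ (Fin n))
    (hc : ∀ k, IntegrableOn (c k) (Icc a b) volume)
    (α : Fin K → ℝ) (hα0 : ∀ k, 0 ≤ α k) (hα1 : ∑ k, α k = 1)
    (ε : ℝ) (hε : 0 < ε) :
    ∃ g : ℝ → EuclideanSpace ℝ (Fin n),
      Measurable g ∧
      (∀ᵐ t ∂(volume.restrict (Icc a b)), ∃ k : Fin K, g t = c k t) ∧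
      ∀ t ∈ Icc a b,
        ‖∫ τ in a..t, (g τ - ∑ k : Fin K, α k • c k τ)‖ < ε := by
  -- the `c k` are only a.e. strongly measurable, so `g` selects among measurable representatives
  let c' k := (hc k).aestronglyMeasurable.mk (c k)
  have hcc' : ∀ᵐ τ ∂(volume.restrict (Icc a b)), ∀ k, c k τ = c' k τ :=
    ae_all_iff.2 fun k => (hc k).aestronglyMeasurable.ae_eq_mk
  obtain ⟨A, Δ, hAm, hAd, hAU, hsmall⟩ := exists_chatteringCombination_norm_integral_lt (c := c')
    (fun k => (hc k).congr_fun_ae (hc k).aestronglyMeasurable.ae_eq_mk) α hα0 hα1 hε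
  refine ⟨chatteringCombination A Δ c', (stronglyMeasurable_chatteringCombination hAm
    fun k => (hc k).aestronglyMeasurable.stronglyMeasurable_mk).measurable, ?_, fun t ht => ?_⟩
  · filter_upwards [hcc'] with τ hτ
    obtain ⟨k, hk⟩ := exists_chatteringCombination_eq hAd hAU c' τ
    exact ⟨k, hk.trans (hτ k).symm⟩
  · have hcongr : ∫ τ in a..t, (chatteringCombination A Δ c' τ - ∑ k, α k • c k τ) =
        ∫ τ in a..t, (chatteringCombination A Δ c' τ - ∑ k, α k • c' k τ) := by
      refine intervalIntegral.integral_congr_ae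
        (((ae_restrict_iff' measurableSet_Icc).1 hcc').mono fun τ hτ hτt => ?_)
      rw [uIoc_of_le ht.1] at hτt
      simp only [hτ (Ioc_subset_Icc_self.trans (Icc_subset_Icc_right ht.2) hτt)]
    exact hcongr ▸ hsmall t ht

/-- Existence part of the Chattering Lemma: given integrable functions
`c 1, …, c K` on `[a,b]`, a chattering measure `α`, and `ε > 0`, there is a
measurable function `g` taking, at almost every `t ∈ [a,b]`, one of the values
`c k t`, whose running integral is uniformly `ε`-close to that of the convex
combination `∑ k, α k • c k`. -/
theorem chattering_lemma_existence
    (n K : ℕ) (hK : 0 < K) (a b : ℝ) (hab : a < b)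
    (c : Fin K → ℝ → EuclideanSpace ℝ (Fin n))
    (hc : ∀ k, IntegrableOn (c k) (Icc a b) volume)
    (α : Fin K → ℝ) (hα0 : ∀ k, 0 ≤ α k) (hα1 : ∑ k, α k = 1)
    (ε : ℝ) (hε : 0 < ε) :
    ∃ g : ℝ → EuclideanSpace ℝ (Fin n),
      Measurable g ∧
      (∀ᵐ t ∂(volume.restrict (Icc a b)), ∃ k : Fin K, g t = c k t) ∧
      ∀ t ∈ Icc a b,
        ‖∫ τ in a..t, (g τ - ∑ k : Fin K, α k • c k τ)‖ < ε :=
  chattering_lemma_existence_general n K a b c hc α hα0 hα1 ε hε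
end

section
/- Let a ∈ ℝ, Δ > 0, let c_1, …, c_K ∈ ℝ^n be pairwise distinct constant vectors, and for a chattering measure α define g^α : [a, a+Δ) → ℝ^n by g^α(t) = c_k for t ∈ [a + Δσ^α_{k−1}, a + Δσ^α_k), where σ^α_0 = 0 and σ^α_k = α_1 + ⋯ + α_k. Then for any two chattering measures α and β, the Lebesgue measure of the set {t ∈ [a, a+Δ) : g^α(t) ≠ g^β(t)} is at most Δ · Σ_{k=1}^{K−1} |σ^α_k − σ^β_k|; in particular this measure tends to 0 as β → α. -/
/-!
A point where the two chattering combinations differ lies in the `k`-th cell of one and the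
`l`-th cell of the other with `k ≠ l`, say `k < l`; it is then caught between the `l`-th
breakpoints of the two partitions. So the discrepancy set is covered by the intervals between
corresponding interior breakpoints `a + Δ σ^α_m` and `a + Δ σ^β_m`, whose lengths are
`Δ |σ^α_m - σ^β_m|`.
-/

open MeasureTheory Set

lemma exists_mem_Ico_succ_of_mem_Ico {γ : Type*} [LinearOrder γ] (s : ℕ → γ) {K : ℕ} {t : γ}
    (ht : t ∈ Ico (s 0) (s K)) : ∃ k < K, t ∈ Ico (s k) (s (k + 1)) := by
  classical
  have hex : ∃ m, t < s m := ⟨K, ht.2⟩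
  have hm0 : Nat.find hex ≠ 0 := fun h => not_lt.2 ht.1 (h ▸ Nat.find_spec hex)
  have hmK : Nat.find hex ≤ K := Nat.find_min' hex ht.2
  refine ⟨Nat.find hex - 1, by omega, not_lt.1 (Nat.find_min hex (by omega)), ?_⟩
  rw [Nat.sub_add_cancel (Nat.one_le_iff_ne_zero.2 hm0)]
  exact Nat.find_spec hex

section StepFunctions

variable {E : Type*} {K : ℕ} {s s' : ℕ → ℝ} {c : ℕ → E} {f g : ℝ → E}

lemma mem_biUnion_uIcc_of_ne (hs : MonotoneOn s (Iic K)) (hs' : MonotoneOn s' (Iic K))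
    (hf : ∀ k < K, ∀ t ∈ Ico (s k) (s (k + 1)), f t = c k)
    (hg : ∀ k < K, ∀ t ∈ Ico (s' k) (s' (k + 1)), g t = c k)
    {t : ℝ} (ht : t ∈ Ico (s 0) (s K)) (ht' : t ∈ Ico (s' 0) (s' K)) (hne : f t ≠ g t) :
    t ∈ ⋃ m ∈ Finset.Ico 1 K, uIcc (s m) (s' m) := by
  obtain ⟨k, hkK, hk⟩ := exists_mem_Ico_succ_of_mem_Ico s ht
  obtain ⟨l, hlK, hl⟩ := exists_mem_Ico_succ_of_mem_Ico s' ht'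
  have hkl : k ≠ l := by
    rintro rfl
    exact hne ((hf k hkK t hk).trans (hg k hlK t hl).symm)
  simp only [mem_iUnion, Finset.mem_Ico, mem_uIcc, exists_prop]
  rcases hkl.lt_or_gt with hlt | hgt
  · have hsl : s (k + 1) ≤ s l := hs (by simp; omega) (by simp; omega) hlt
    exact ⟨l, ⟨by omega, hlK⟩, Or.inr ⟨hl.1, (hk.2.trans_le hsl).le⟩⟩
  · have hsk : s' (l + 1) ≤ s' k := hs' (by simp; omega) (by simp; omega) hgt
    exact ⟨k, ⟨by omega, hkK⟩, Or.inl ⟨hk.1, (hl.2.trans_le hsk).le⟩⟩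

lemma volume_setOf_ne_le_sum {a b : ℝ} (hs : MonotoneOn s (Iic K))
    (hs' : MonotoneOn s' (Iic K))
    (hf : ∀ k < K, ∀ t ∈ Ico (s k) (s (k + 1)), f t = c k)
    (hg : ∀ k < K, ∀ t ∈ Ico (s' k) (s' (k + 1)), g t = c k)
    (hs0 : s 0 = a) (hsK : s K = b) (hs'0 : s' 0 = a) (hs'K : s' K = b) :
    volume {t ∈ Ico a b | f t ≠ g t} ≤ ∑ m ∈ Finset.Ico 1 K, ENNReal.ofReal |s m - s' m| := by
  have hcover : {t ∈ Ico a b | f t ≠ g t} ⊆ ⋃ m ∈ Finset.Ico 1 K, uIcc (s m) (s' m) := by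
    rintro t ⟨ht, hne⟩
    subst hs0 hsK
    exact mem_biUnion_uIcc_of_ne hs hs' hf hg ht (hs'0 ▸ hs'K ▸ ht) hne
  calc volume {t ∈ Ico a b | f t ≠ g t}
      ≤ volume (⋃ m ∈ Finset.Ico 1 K, uIcc (s m) (s' m)) := measure_mono hcover
    _ ≤ ∑ m ∈ Finset.Ico 1 K, volume (uIcc (s m) (s' m)) := measure_biUnion_finset_le _ _
    _ = ∑ m ∈ Finset.Ico 1 K, ENNReal.ofReal |s m - s' m| := by
      simp only [Real.volume_interval, abs_sub_comm]

end StepFunctions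

lemma monotoneOn_add_mul_sum_range {α : ℕ → ℝ} {K : ℕ} (a : ℝ) {Δ : ℝ} (hΔ : 0 ≤ Δ)
    (hα : ∀ k < K, 0 ≤ α k) :
    MonotoneOn (fun k => a + Δ * ∑ j ∈ Finset.range k, α j) (Iic K) := by
  intro i _ j hj hij
  dsimp only
  gcongr a + Δ * ?_
  exact Finset.sum_le_sum_of_subset_of_nonneg (Finset.range_subset_range.2 hij)
    fun l hl _ => hα l ((Finset.mem_range.1 hl).trans_le hj)

lemma sum_abs_sum_range_sub_le {α β : ℕ → ℝ} {K : ℕ} {δ : ℝ}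
    (h : ∀ k < K, |β k - α k| ≤ δ) :
    ∑ m ∈ Finset.Ico 1 K, |∑ j ∈ Finset.range m, α j - ∑ j ∈ Finset.range m, β j| ≤
      K ^ 2 * δ := by
  set S := ∑ j ∈ Finset.range K, |α j - β j|
  have hS : 0 ≤ S := Finset.sum_nonneg fun _ _ => abs_nonneg _
  have hterm : ∀ m ∈ Finset.Ico 1 K,
      |∑ j ∈ Finset.range m, α j - ∑ j ∈ Finset.range m, β j| ≤ S := by
    intro m hm
    rw [← Finset.sum_sub_distrib]
    refine (Finset.abs_sum_le_sum_abs _ _).trans ?_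
    exact Finset.sum_le_sum_of_subset_of_nonneg
      (Finset.range_subset_range.2 (Finset.mem_Ico.1 hm).2.le) fun _ _ _ => abs_nonneg _
  have hSle : S ≤ K * δ := by
    have := Finset.sum_le_card_nsmul (Finset.range K) _ δ fun j hj =>
      abs_sub_comm (β j) (α j) ▸ h j (Finset.mem_range.1 hj)
    simpa using this
  calc _ ≤ (Finset.Ico 1 K).card • S := Finset.sum_le_card_nsmul _ _ _ hterm
    _ ≤ K * S := by
      rw [nsmul_eq_mul, Nat.card_Ico]
      gcongr
      exact_mod_cast Nat.sub_le K 1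
    _ ≤ K * (K * δ) := by gcongr
    _ = K ^ 2 * δ := by ring

theorem chattering_continuity_general
    (n K : ℕ) (a Δ : ℝ) (hΔ : 0 < Δ)
    (c : ℕ → EuclideanSpace ℝ (Fin n))
    (α : ℕ → ℝ) (hα0 : ∀ k < K, 0 ≤ α k)
    (hα1 : ∑ k ∈ Finset.range K, α k = 1)
    (gα : ℝ → EuclideanSpace ℝ (Fin n))
    (hgα : ∀ k < K, ∀ t ∈ Ico (a + Δ * ∑ j ∈ Finset.range k, α j)
          (a + Δ * ∑ j ∈ Finset.range (k + 1), α j), gα t = c k) :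
    (∀ (β : ℕ → ℝ) (gβ : ℝ → EuclideanSpace ℝ (Fin n)),
        (∀ k < K, 0 ≤ β k) → (∑ k ∈ Finset.range K, β k = 1) →
        (∀ k < K, ∀ t ∈ Ico (a + Δ * ∑ j ∈ Finset.range k, β j)
            (a + Δ * ∑ j ∈ Finset.range (k + 1), β j), gβ t = c k) →
        volume {t ∈ Ico a (a + Δ) | gα t ≠ gβ t} ≤
          ENNReal.ofReal (Δ * ∑ k ∈ Finset.Ico 1 K,
            |(∑ j ∈ Finset.range k, α j) - (∑ j ∈ Finset.range k, β j)|)) ∧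
    (∀ ε > (0 : ℝ), ∃ δ > (0 : ℝ),
      ∀ (β : ℕ → ℝ) (gβ : ℝ → EuclideanSpace ℝ (Fin n)),
        (∀ k < K, 0 ≤ β k) → (∑ k ∈ Finset.range K, β k = 1) →
        (∀ k < K, ∀ t ∈ Ico (a + Δ * ∑ j ∈ Finset.range k, β j)
            (a + Δ * ∑ j ∈ Finset.range (k + 1), β j), gβ t = c k) →
        (∀ k < K, |β k - α k| < δ) →
        volume {t ∈ Ico a (a + Δ) | gα t ≠ gβ t} < ENNReal.ofReal ε) := by
  have hbound : ∀ (β : ℕ → ℝ) (gβ : ℝ → EuclideanSpace ℝ (Fin n)),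
      (∀ k < K, 0 ≤ β k) → (∑ k ∈ Finset.range K, β k = 1) →
      (∀ k < K, ∀ t ∈ Ico (a + Δ * ∑ j ∈ Finset.range k, β j)
          (a + Δ * ∑ j ∈ Finset.range (k + 1), β j), gβ t = c k) →
      volume {t ∈ Ico a (a + Δ) | gα t ≠ gβ t} ≤
        ENNReal.ofReal (Δ * ∑ k ∈ Finset.Ico 1 K,
          |(∑ j ∈ Finset.range k, α j) - (∑ j ∈ Finset.range k, β j)|) := by
    intro β gβ hβ0 hβ1 hgβ
    refine (volume_setOf_ne_le_sum (monotoneOn_add_mul_sum_range a hΔ.le hα0)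
      (monotoneOn_add_mul_sum_range a hΔ.le hβ0) hgα hgβ (by simp) (by simp [hα1]) (by simp)
      (by simp [hβ1])).trans_eq ?_
    rw [Finset.mul_sum, ENNReal.ofReal_sum_of_nonneg fun _ _ => by positivity]
    refine Finset.sum_congr rfl fun m _ => ?_
    rw [add_sub_add_left_eq_sub, ← mul_sub, abs_mul, abs_of_pos hΔ]
  refine ⟨hbound, fun ε hε => ⟨ε / (Δ * (K ^ 2 + 1)), by positivity, ?_⟩⟩
  intro β gβ hβ0 hβ1 hgβ hclose
  refine (hbound β gβ hβ0 hβ1 hgβ).trans_lt ((ENNReal.ofReal_lt_ofReal_iff hε).2 ?_)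
  calc _ ≤ Δ * (K ^ 2 * (ε / (Δ * (K ^ 2 + 1)))) := by
        gcongr
        exact sum_abs_sum_range_sub_le fun k hk => (hclose k hk).le
    _ = ε * (K ^ 2 / (K ^ 2 + 1)) := by field_simp
    _ < ε := mul_lt_of_lt_one_right hε ((div_lt_one (by positivity)).2 (lt_add_one _))

/-- Continuity part of the Chattering Lemma: if `gα`, `gβ` are the explicit
chattering combinations on `[a, a+Δ)` of pairwise distinct constant levels
`c 0, …, c (K-1)` with chattering measures `α` and `β` (constant value `c k`
on `[a + Δ·σ k, a + Δ·σ (k+1))`, `σ k` the partial sums of the measure), then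
the set where they differ has Lebesgue measure at most
`Δ * ∑_{k=1}^{K-1} |σ^α k - σ^β k|`; in particular it tends to `0` as
`β → α`. -/
theorem chattering_continuity
    (n K : ℕ) (hK : 0 < K) (a Δ : ℝ) (hΔ : 0 < Δ)
    (c : ℕ → EuclideanSpace ℝ (Fin n))
    (hc : ∀ i < K, ∀ j < K, i ≠ j → c i ≠ c j)
    (α : ℕ → ℝ) (hα0 : ∀ k < K, 0 ≤ α k)
    (hα1 : ∑ k ∈ Finset.range K, α k = 1)
    (gα : ℝ → EuclideanSpace ℝ (Fin n))
    (hgα : ∀ k < K, ∀ t ∈ Ico (a + Δ * ∑ j ∈ Finset.range k, α j)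
          (a + Δ * ∑ j ∈ Finset.range (k + 1), α j), gα t = c k) :
    (∀ (β : ℕ → ℝ) (gβ : ℝ → EuclideanSpace ℝ (Fin n)),
        (∀ k < K, 0 ≤ β k) → (∑ k ∈ Finset.range K, β k = 1) →
        (∀ k < K, ∀ t ∈ Ico (a + Δ * ∑ j ∈ Finset.range k, β j)
            (a + Δ * ∑ j ∈ Finset.range (k + 1), β j), gβ t = c k) →
        volume {t ∈ Ico a (a + Δ) | gα t ≠ gβ t} ≤
          ENNReal.ofReal (Δ * ∑ k ∈ Finset.Ico 1 K,
            |(∑ j ∈ Finset.range k, α j) - (∑ j ∈ Finset.range k, β j)|)) ∧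
    (∀ ε > (0 : ℝ), ∃ δ > (0 : ℝ),
      ∀ (β : ℕ → ℝ) (gβ : ℝ → EuclideanSpace ℝ (Fin n)),
        (∀ k < K, 0 ≤ β k) → (∑ k ∈ Finset.range K, β k = 1) →
        (∀ k < K, ∀ t ∈ Ico (a + Δ * ∑ j ∈ Finset.range k, β j)
            (a + Δ * ∑ j ∈ Finset.range (k + 1), β j), gβ t = c k) →
        (∀ k < K, |β k - α k| < δ) →
        volume {t ∈ Ico a (a + Δ) | gα t ≠ gβ t} < ENNReal.ofReal ε) :=
  chattering_continuity_general n K a Δ hΔ c α hα0 hα1 gα hgα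
end

section
/- Let T > 0, let H : ℝ × ℝ^n × ℝ^n × ℝ^m → ℝ be continuous, let x, p : [0,T] → ℝ^n be continuous, and let c_1, …, c_K ∈ ℝ^m be fixed vectors. Then for every ε > 0 there exists δ > 0 such that for every a ∈ [0,T], every Δ ∈ (0, δ] with a + Δ ≤ T, every chattering measure α, and every measurable u : [a, a+Δ] → ℝ^m for which there exist pairwise disjoint measurable sets A_1, …, A_K covering [a, a+Δ] with Lebesgue measure μ(A_k) = α_k Δ and u(t) = c_k for t ∈ A_k, one has |∫_a^{a+Δ} H(t, x(t), p(t), u(t)) dt − Δ · Σ_{k=1}^K α_k H(a, x(a), p(a), c_k)| ≤ ε Δ. -/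
open MeasureTheory Set Function

/-! On `A k` the integrand is the frozen-level Hamiltonian `g k t = H (t, x t, p t, c k)`,
which is uniformly continuous on `[0, T]`, so once `Δ ≤ δ` it stays within `ε` of `g k a`
there. Summing over the partition, the error is at most `ε · ∑ k, |A k| = ε · Δ`. -/

theorem IsCompact.exists_forall_dist_le_of_continuousOn {X Y ι : Type*}
    [PseudoMetricSpace X] [PseudoMetricSpace Y] [Fintype ι] {s : Set X} (hs : IsCompact s)
    {g : ι → X → Y} (hg : ∀ i, ContinuousOn (g i) s) {ε : ℝ} (hε : 0 < ε) :
    ∃ δ > 0, ∀ i, ∀ y ∈ s, ∀ z ∈ s, dist y z ≤ δ → dist (g i y) (g i z) ≤ ε := by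
  -- Bundle the family into one map to the sup-metric product `ι → Y`.
  have hG : UniformContinuousOn (fun y i => g i y) s :=
    hs.uniformContinuousOn_of_continuous (continuousOn_pi.2 hg)
  obtain ⟨δ, hδ, hGδ⟩ := Metric.uniformContinuousOn_iff_le.1 hG ε hε
  exact ⟨δ, hδ, fun i y hy z hz hyz =>
    (dist_le_pi_dist (fun i => g i y) (fun i => g i z) i).trans (hGδ y hy z hz hyz)⟩

theorem norm_setIntegral_iUnion_sub_sum_le {X E ι : Type*} [MeasurableSpace X]
    [NormedAddCommGroup E] [NormedSpace ℝ E] [CompleteSpace E] [Fintype ι] {μ : Measure X}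
    {A : ι → Set X} (hAm : ∀ i, MeasurableSet (A i)) (hAd : Pairwise (Disjoint on A))
    (hAfin : ∀ i, μ (A i) < ⊤) {f : X → E} (hf : ∀ i, IntegrableOn f (A i) μ)
    {v : ι → E} {ε : ℝ} (hfv : ∀ i, ∀ t ∈ A i, ‖f t - v i‖ ≤ ε) :
    ‖∫ t in ⋃ i, A i, f t ∂μ - ∑ i, μ.real (A i) • v i‖ ≤ ε * μ.real (⋃ i, A i) := by
  have hpiece : ∀ i, ∫ t in A i, f t ∂μ - μ.real (A i) • v i = ∫ t in A i, (f t - v i) ∂μ :=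
    fun i => by rw [integral_sub (hf i) (integrableOn_const (hAfin i).ne), setIntegral_const]
  calc ‖∫ t in ⋃ i, A i, f t ∂μ - ∑ i, μ.real (A i) • v i‖
      = ‖∑ i, ∫ t in A i, (f t - v i) ∂μ‖ := by
        rw [integral_iUnion_fintype hAm hAd hf, ← Finset.sum_sub_distrib]
        simp_rw [hpiece]
    _ ≤ ∑ i, ε * μ.real (A i) := norm_sum_le_of_le _ fun i _ =>
        norm_setIntegral_le_of_norm_le_const (hAfin i) (hfv i)
    _ = ε * μ.real (⋃ i, A i) := by
        rw [measureReal_iUnion_fintype hAd hAm fun i => (hAfin i).ne, Finset.mul_sum]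

theorem hamiltonian_chattering_approx_general
    (n m K : ℕ) (T : ℝ)
    (H : ℝ × EuclideanSpace ℝ (Fin n) × EuclideanSpace ℝ (Fin n) ×
          EuclideanSpace ℝ (Fin m) → ℝ)
    (hH : Continuous H)
    (x p : ℝ → EuclideanSpace ℝ (Fin n))
    (hx : ContinuousOn x (Icc 0 T)) (hp : ContinuousOn p (Icc 0 T))
    (c : Fin K → EuclideanSpace ℝ (Fin m)) :
    ∀ ε > (0 : ℝ), ∃ δ > (0 : ℝ),
      ∀ a ∈ Icc (0 : ℝ) T, ∀ Δ : ℝ, 0 < Δ → Δ ≤ δ → a + Δ ≤ T →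
      ∀ α : Fin K → ℝ, (∀ k, 0 ≤ α k) → (∑ k, α k = 1) →
      ∀ u : ℝ → EuclideanSpace ℝ (Fin m), Measurable u →
      ∀ A : Fin K → Set ℝ,
        (∀ k, MeasurableSet (A k)) →
        (∀ i j, i ≠ j → Disjoint (A i) (A j)) →
        (∀ k, A k ⊆ Icc a (a + Δ)) →
        (Icc a (a + Δ) ⊆ ⋃ k, A k) →
        (∀ k, volume (A k) = ENNReal.ofReal (α k * Δ)) →
        (∀ k, ∀ t ∈ A k, u t = c k) →
        |(∫ t in a..(a + Δ), H (t, x t, p t, u t)) -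
            Δ * ∑ k, α k * H (a, x a, p a, c k)| ≤ ε * Δ := by
  intro ε hε
  set g : Fin K → ℝ → ℝ := fun k t => H (t, x t, p t, c k)
  have hg : ∀ k, ContinuousOn (g k) (Icc 0 T) := fun k =>
    hH.comp_continuousOn (continuousOn_id.prodMk (hx.prodMk (hp.prodMk continuousOn_const)))
  obtain ⟨δ, hδ, hgδ⟩ := isCompact_Icc.exists_forall_dist_le_of_continuousOn hg hε
  refine ⟨δ, hδ, fun a ha Δ hΔ hΔδ haΔ α hα _ u _ A hAm hAd hAsub hAcover hAvol hAu => ?_⟩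
  have hIcc : Icc a (a + Δ) = ⋃ k, A k := hAcover.antisymm (iUnion_subset hAsub)
  have hIccT : Icc a (a + Δ) ⊆ Icc 0 T := Icc_subset_Icc ha.1 haΔ
  have hug : ∀ k, EqOn (g k) (fun t => H (t, x t, p t, u t)) (A k) := fun k t ht => by
    simp only [g, hAu k t ht]
  have hint : ∀ k, IntegrableOn (fun t => H (t, x t, p t, u t)) (A k) := fun k =>
    (((hg k).integrableOn_compact isCompact_Icc).mono_set ((hAsub k).trans hIccT)).congr_fun
      (hug k) (hAm k)
  have hclose : ∀ k, ∀ t ∈ A k, ‖H (t, x t, p t, u t) - g k a‖ ≤ ε := fun k t ht => by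
    have hta : dist t a ≤ δ := (Real.dist_le_of_mem_Icc (hAsub k ht)
      (left_mem_Icc.2 (by linarith))).trans (by linarith)
    simpa only [dist_eq_norm, hug k ht] using hgδ k t (hIccT (hAsub k ht)) a ha hta
  have hvol : ∀ k, volume.real (A k) = α k * Δ := fun k => by
    rw [measureReal_def, hAvol, ENNReal.toReal_ofReal (mul_nonneg (hα k) hΔ.le)]
  have key := norm_setIntegral_iUnion_sub_sum_le hAm hAd
    (fun k => hAvol k ▸ ENNReal.ofReal_lt_top) hint hclose
  rw [← hIcc, Real.volume_real_Icc_of_le (by linarith), add_sub_cancel_left,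
    Real.norm_eq_abs] at key
  simp only [hvol, smul_eq_mul] at key
  rw [intervalIntegral.integral_of_le (by linarith), ← integral_Icc_eq_integral_Ioc]
  convert key using 3
  rw [Finset.mul_sum]
  exact Finset.sum_congr rfl fun k _ => by ring

/-- Chattering approximation of the Hamiltonian integral (Theorem 1, made
quantitative): for continuous `H` and continuous trajectories `x`, `p` on
`[0,T]`, and fixed levels `c k`, for every `ε > 0` there is `δ > 0` such that
for every subinterval `[a, a+Δ] ⊆ [0,T]` with `0 < Δ ≤ δ`, every chattering
measure `α`, and every measurable chattering control `u` with levels `c k`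
and measure `α` on `[a, a+Δ]`,
`|∫_a^{a+Δ} H(t,x(t),p(t),u(t)) dt − Δ·∑ k, α k · H(a,x(a),p(a),c k)| ≤ ε·Δ`. -/
theorem hamiltonian_chattering_approx
    (n m K : ℕ) (T : ℝ) (hT : 0 < T)
    (H : ℝ × EuclideanSpace ℝ (Fin n) × EuclideanSpace ℝ (Fin n) ×
          EuclideanSpace ℝ (Fin m) → ℝ)
    (hH : Continuous H)
    (x p : ℝ → EuclideanSpace ℝ (Fin n))
    (hx : ContinuousOn x (Icc 0 T)) (hp : ContinuousOn p (Icc 0 T))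
    (c : Fin K → EuclideanSpace ℝ (Fin m)) :
    ∀ ε > (0 : ℝ), ∃ δ > (0 : ℝ),
      ∀ a ∈ Icc (0 : ℝ) T, ∀ Δ : ℝ, 0 < Δ → Δ ≤ δ → a + Δ ≤ T →
      ∀ α : Fin K → ℝ, (∀ k, 0 ≤ α k) → (∑ k, α k = 1) →
      ∀ u : ℝ → EuclideanSpace ℝ (Fin m), Measurable u →
      ∀ A : Fin K → Set ℝ,
        (∀ k, MeasurableSet (A k)) →
        (∀ i j, i ≠ j → Disjoint (A i) (A j)) →
        (∀ k, A k ⊆ Icc a (a + Δ)) →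
        (Icc a (a + Δ) ⊆ ⋃ k, A k) →
        (∀ k, volume (A k) = ENNReal.ofReal (α k * Δ)) →
        (∀ k, ∀ t ∈ A k, u t = c k) →
        |(∫ t in a..(a + Δ), H (t, x t, p t, u t)) -
            Δ * ∑ k, α k * H (a, x a, p a, c k)| ≤ ε * Δ :=
  hamiltonian_chattering_approx_general n m K T H hH x p hx hp c
end

section
/- Let a < b, let h : ℝ × ℝ^n → ℝ^n be continuous and Lipschitz in its second argument with constant L (i.e. ‖h(t,x) − h(t,y)‖ ≤ L‖x − y‖ for all t ∈ [a,b] and x, y ∈ ℝ^n), and let B : [a,b] → ℝ^{n×m} be Lipschitz with constant L_B and satisfy ‖B(t)‖ ≤ M for all t ∈ [a,b]. Let u, v : [a,b] → ℝ^m be bounded measurable controls and suppose ‖∫_a^t (u(s) − v(s)) ds‖ ≤ ε for all t ∈ [a,b]. If x_u, x_v : [a,b] → ℝ^n are continuous and satisfy x_u(t) = x_0 + ∫_a^t (h(s, x_u(s)) + B(s) u(s)) ds and x_v(t) = x_0 + ∫_a^t (h(s, x_v(s)) + B(s) v(s)) ds for all t ∈ [a,b], then sup_{t∈[a,b]} ‖x_u(t)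 − x_v(t)‖ ≤ (M + L_B (b−a)) ε e^{L(b−a)}. -/
open MeasureTheory Set

lemma abel_clm {F G : Type*} [NormedAddCommGroup F] [NormedSpace ℝ F]
    [NormedAddCommGroup G] [NormedSpace ℝ G]
    (A : ℕ → F →L[ℝ] G) (U : ℕ → F) (k : ℕ) :
    ∑ i ∈ Finset.range k, A i (U (i+1) - U i)
      = A k (U k) - A 0 (U 0) + ∑ j ∈ Finset.range k, (A j - A (j+1)) (U (j+1)) := by
  induction k with
  | zero => simp
  | succ k ih =>
    rw [Finset.sum_range_succ, ih, Finset.sum_range_succ]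
    simp only [ContinuousLinearMap.sub_apply, map_sub]
    abel

lemma key_estimate {F G : Type*} [NormedAddCommGroup F] [NormedSpace ℝ F] [CompleteSpace F]
    [NormedAddCommGroup G] [NormedSpace ℝ G] [CompleteSpace G]
    (a b t : ℝ) (hat : a ≤ t) (htb : t ≤ b)
    (B : ℝ → F →L[ℝ] G) (L_B : ℝ) (hL_B : 0 ≤ L_B)
    (hBLip : ∀ s ∈ Icc a b, ∀ r ∈ Icc a b, ‖B s - B r‖ ≤ L_B * |s - r|)
    (g : ℝ → F) (C : ℝ) (hC : 0 ≤ C)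
    (hgb : ∀ s ∈ Icc a b, ‖g s‖ ≤ C)
    (hgint : ∀ c d : ℝ, c ∈ Icc a b → d ∈ Icc a b → IntervalIntegrable g volume c d)
    (hBgint : ∀ c d : ℝ, c ∈ Icc a b → d ∈ Icc a b →
      IntervalIntegrable (fun s => (B s - B t) (g s)) volume c d)
    (ε : ℝ) (hε : 0 ≤ ε)
    (hU : ∀ τ ∈ Icc a b, ‖∫ s in a..τ, g s‖ ≤ ε) :
    ‖∫ s in a..t, (B s - B t) (g s)‖ ≤ L_B * (t - a) * ε := by
  have hab : a ≤ b := hat.trans htb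
  have hta : 0 ≤ t - a := by linarith
  have key : ∀ N : ℕ, 0 < N → ‖∫ s in a..t, (B s - B t) (g s)‖
      ≤ L_B * (t - a) * ε + L_B * C * (t - a) ^ 2 / N := by
    intro N hN
    have hNR : (0:ℝ) < N := Nat.cast_pos.2 hN
    set Δ : ℝ := (t - a) / N with hΔdef
    have hΔ0 : 0 ≤ Δ := div_nonneg hta hNR.le
    set p : ℕ → ℝ := fun i => a + i * Δ with hp
    have hp0 : p 0 = a := by simp [hp]
    have hNΔ : (N:ℝ) * Δ = t - a := by rw [hΔdef]; field_simp
    have hpN : p N = t := by simp only [hp]; rw [hNΔ]; ring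
    have hpmem : ∀ i : ℕ, i ≤ N → p i ∈ Icc a b := by
      intro i hi
      have h0 : 0 ≤ (i:ℝ) * Δ := mul_nonneg (Nat.cast_nonneg i) hΔ0
      have h1 : (i:ℝ) * Δ ≤ N * Δ := mul_le_mul_of_nonneg_right (by exact_mod_cast hi) hΔ0
      constructor
      · simp only [hp]; linarith
      · simp only [hp]; rw [hNΔ] at h1; linarith
    have hstep : ∀ i : ℕ, p (i+1) - p i = Δ := by
      intro i; simp only [hp]; push_cast; ring
    have hple : ∀ i : ℕ, p i ≤ p (i+1) := by
      intro i; have := hstep i; linarith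
    have hcomp : ∀ (A : F →L[ℝ] G) (c d : ℝ), IntervalIntegrable g volume c d →
        IntervalIntegrable (fun s => A (g s)) volume c d :=
      fun A c d hgcd => ⟨A.integrable_comp hgcd.1, A.integrable_comp hgcd.2⟩
    set U : ℕ → F := fun i => ∫ s in a..(p i), g s with hUdef
    set A : ℕ → F →L[ℝ] G := fun i => B (p i) - B t with hAdef
    have hsplit : ∫ s in a..t, (B s - B t) (g s)
        = ∑ i ∈ Finset.range N, ∫ s in (p i)..(p (i+1)), (B s - B t) (g s) := by
      have := intervalIntegral.sum_integral_adjacent_intervals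
        (a := p) (n := N) (f := fun s => (B s - B t) (g s)) (μ := volume)
        (fun k hk => hBgint _ _ (hpmem k (le_of_lt hk)) (hpmem (k+1) hk))
      rw [hp0, hpN] at this
      exact this.symm
    have hpiece : ∀ i ∈ Finset.range N, (∫ s in (p i)..(p (i+1)), (B s - B t) (g s))
        = (∫ s in (p i)..(p (i+1)), ((B s - B t) (g s) - (A i) (g s))) + A i (U (i+1) - U i) := by
      intro i hi
      have hi' : i + 1 ≤ N := Finset.mem_range.1 hi
      have hmi : p i ∈ Icc a b := hpmem i (by omega)
      have hmi1 : p (i+1) ∈ Icc a b := hpmem (i+1) hi'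
      have h1 : IntervalIntegrable (fun s => (B s - B t) (g s)) volume (p i) (p (i+1)) :=
        hBgint _ _ hmi hmi1
      have hg1 : IntervalIntegrable g volume (p i) (p (i+1)) := hgint _ _ hmi hmi1
      have h2 : IntervalIntegrable (fun s => (A i) (g s)) volume (p i) (p (i+1)) :=
        hcomp _ _ _ hg1
      have hAU : (∫ s in (p i)..(p (i+1)), (A i) (g s)) = A i (U (i+1) - U i) := by
        rw [(A i).intervalIntegral_comp_comm hg1]
        congr 1
        simp only [hUdef]
        rw [eq_sub_iff_add_eq, add_comm]
        exact intervalIntegral.integral_add_adjacent_intervals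
          (hgint a (p i) (left_mem_Icc.2 hab) hmi) hg1
      rw [intervalIntegral.integral_sub h1 h2, hAU]
      abel
    have hEbound : ∀ i ∈ Finset.range N,
        ‖∫ s in (p i)..(p (i+1)), ((B s - B t) (g s) - (A i) (g s))‖ ≤ L_B * Δ * C * Δ := by
      intro i hi
      have hi' : i + 1 ≤ N := Finset.mem_range.1 hi
      have hmi : p i ∈ Icc a b := hpmem i (by omega)
      have hmi1 : p (i+1) ∈ Icc a b := hpmem (i+1) hi'
      have := intervalIntegral.norm_integral_le_of_norm_le_const
        (a := p i) (b := p (i+1)) (C := L_B * Δ * C)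
        (f := fun s => (B s - B t) (g s) - (A i) (g s)) ?_
      · calc ‖∫ s in (p i)..(p (i+1)), ((B s - B t) (g s) - (A i) (g s))‖
            ≤ L_B * Δ * C * |p (i+1) - p i| := this
          _ = L_B * Δ * C * Δ := by rw [hstep i, abs_of_nonneg hΔ0]
      · intro s hs
        rw [uIoc_of_le (hple i)] at hs
        have hsmem : s ∈ Icc a b := ⟨le_trans hmi.1 hs.1.le, le_trans hs.2 hmi1.2⟩
        have heq : (B s - B t) (g s) - (A i) (g s) = (B s - B (p i)) (g s) := by
          simp only [hAdef, ContinuousLinearMap.sub_apply]; abel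
        beta_reduce
        rw [heq]
        have hBs : ‖B s - B (p i)‖ ≤ L_B * Δ := by
          refine le_trans (hBLip s hsmem _ hmi) ?_
          have : |s - p i| ≤ Δ := by
            rw [abs_of_nonneg (by linarith [hs.1.le])]
            have := hstep i; linarith [hs.2]
          exact mul_le_mul_of_nonneg_left this hL_B
        calc ‖(B s - B (p i)) (g s)‖ ≤ ‖B s - B (p i)‖ * ‖g s‖ :=
              (B s - B (p i)).le_opNorm _
          _ ≤ (L_B * Δ) * C := mul_le_mul hBs (hgb s hsmem) (norm_nonneg _)
              (mul_nonneg hL_B hΔ0)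
    have hSid : ∑ i ∈ Finset.range N, A i (U (i+1) - U i)
        = ∑ j ∈ Finset.range N, (A j - A (j+1)) (U (j+1)) := by
      rw [abel_clm]
      have hAN : A N = 0 := by simp [hAdef, hpN]
      have hU0 : U 0 = 0 := by simp [hUdef, hp0]
      simp [hAN, hU0]
    have hSbound : ‖∑ i ∈ Finset.range N, A i (U (i+1) - U i)‖ ≤ N * (L_B * Δ * ε) := by
      rw [hSid]
      refine le_trans (norm_sum_le _ _) ?_
      have hterm : ∀ j ∈ Finset.range N, ‖(A j - A (j+1)) (U (j+1))‖ ≤ L_B * Δ * ε := by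
        intro j hj
        have hj' : j + 1 ≤ N := Finset.mem_range.1 hj
        have hmj : p j ∈ Icc a b := hpmem j (by omega)
        have hmj1 : p (j+1) ∈ Icc a b := hpmem (j+1) hj'
        have hA : A j - A (j+1) = B (p j) - B (p (j+1)) := by
          simp only [hAdef]; abel
        have hAnorm : ‖A j - A (j+1)‖ ≤ L_B * Δ := by
          rw [hA]
          refine le_trans (hBLip _ hmj _ hmj1) ?_
          have : |p j - p (j+1)| = Δ := by
            rw [abs_sub_comm, abs_of_nonneg (by linarith [hple j])]
            exact hstep j
          rw [this]
        calc ‖(A j - A (j+1)) (U (j+1))‖ ≤ ‖A j - A (j+1)‖ * ‖U (j+1)‖ :=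
              (A j - A (j+1)).le_opNorm _
          _ ≤ (L_B * Δ) * ε := mul_le_mul hAnorm (hU _ hmj1) (norm_nonneg _)
              (mul_nonneg hL_B hΔ0)
      refine le_trans (Finset.sum_le_sum hterm) ?_
      rw [Finset.sum_const, Finset.card_range, nsmul_eq_mul]
    calc ‖∫ s in a..t, (B s - B t) (g s)‖
        = ‖(∑ i ∈ Finset.range N, ∫ s in (p i)..(p (i+1)), ((B s - B t) (g s) - (A i) (g s)))
            + ∑ i ∈ Finset.range N, A i (U (i+1) - U i)‖ := by
          rw [hsplit, Finset.sum_congr rfl hpiece, Finset.sum_add_distrib]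
      _ ≤ ‖∑ i ∈ Finset.range N, ∫ s in (p i)..(p (i+1)), ((B s - B t) (g s) - (A i) (g s))‖
            + ‖∑ i ∈ Finset.range N, A i (U (i+1) - U i)‖ := norm_add_le _ _
      _ ≤ (∑ i ∈ Finset.range N, ‖∫ s in (p i)..(p (i+1)), ((B s - B t) (g s) - (A i) (g s))‖)
            + N * (L_B * Δ * ε) := add_le_add (norm_sum_le _ _) hSbound
      _ ≤ N * (L_B * Δ * C * Δ) + N * (L_B * Δ * ε) := by
          refine add_le_add ?_ le_rfl
          refine le_trans (Finset.sum_le_sum hEbound) ?_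
          rw [Finset.sum_const, Finset.card_range, nsmul_eq_mul]
      _ = L_B * (t - a) * ε + L_B * C * (t - a) ^ 2 / N := by
          have h1 : (N:ℝ) * (L_B * Δ * ε) = L_B * (t - a) * ε := by
            rw [show (N:ℝ) * (L_B * Δ * ε) = L_B * ((N:ℝ)*Δ) * ε by ring, hNΔ]
          have h2 : (N:ℝ) * (L_B * Δ * C * Δ) = L_B * C * (t - a)^2 / N := by
            rw [hΔdef]; field_simp
          rw [h1, h2]; ring
  refine le_of_forall_pos_le_add ?_
  intro δ hδ
  obtain ⟨N, hN⟩ := exists_nat_gt (max 0 (L_B * C * (t - a) ^ 2 / δ))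
  have hN0 : 0 < N := by
    have : (0:ℝ) < N := lt_of_le_of_lt (le_max_left _ _) hN
    exact_mod_cast this
  have hNR : (0:ℝ) < N := Nat.cast_pos.2 hN0
  refine (key N hN0).trans ?_
  have hK : L_B * C * (t - a) ^ 2 / N ≤ δ := by
    rw [div_le_iff₀ hNR]
    have := (div_lt_iff₀ hδ).1 (lt_of_le_of_lt (le_max_right _ _) hN)
    linarith
  linarith

lemma interval_integrable_of_bounded {E : Type*} [NormedAddCommGroup E]
    {a b : ℝ} (f : ℝ → E) (K : ℝ)
    (hm : AEStronglyMeasurable f (volume.restrict (Icc a b)))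
    (hb : ∀ s ∈ Icc a b, ‖f s‖ ≤ K) :
    ∀ c d : ℝ, c ∈ Icc a b → d ∈ Icc a b → IntervalIntegrable f volume c d := by
  intro c d hc hd
  rw [intervalIntegrable_iff]
  have hIcc : IntegrableOn f (Icc a b) volume := by
    refine Integrable.mono' (g := fun _ => K) ?_ hm ?_
    · exact integrableOn_const measure_Icc_lt_top.ne
    · exact (ae_restrict_iff' measurableSet_Icc).2 (Filter.Eventually.of_forall hb)
  refine hIcc.mono_set ?_
  intro s hs
  rcases le_total c d with hcd | hcd
  · rw [uIoc_of_le hcd] at hs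
    exact ⟨le_trans hc.1 hs.1.le, le_trans hs.2 hd.2⟩
  · rw [uIoc_of_ge hcd] at hs
    exact ⟨le_trans hd.1 hs.1.le, le_trans hs.2 hc.2⟩

set_option maxHeartbeats 1000000 in
/-- Trajectory closeness for control-affine systems: if the running integrals
of two bounded measurable controls `u`, `v` are uniformly `ε`-close on
`[a,b]`, then the corresponding trajectories of `ẋ = h(t,x) + B(t)u` starting
from the same initial state are uniformly
`(M + L_B·(b−a))·ε·e^{L·(b−a)}`-close. -/
theorem control_affine_trajectory_closeness
    (n m : ℕ) (a b : ℝ) (hab : a < b)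
    (h : ℝ → EuclideanSpace ℝ (Fin n) → EuclideanSpace ℝ (Fin n))
    (hcont : Continuous fun q : ℝ × EuclideanSpace ℝ (Fin n) => h q.1 q.2)
    (L : ℝ)
    (hLip : ∀ t ∈ Icc a b, ∀ x y, ‖h t x - h t y‖ ≤ L * ‖x - y‖)
    (B : ℝ → EuclideanSpace ℝ (Fin m) →L[ℝ] EuclideanSpace ℝ (Fin n))
    (L_B M : ℝ)
    (hBLip : ∀ s ∈ Icc a b, ∀ t ∈ Icc a b, ‖B s - B t‖ ≤ L_B * |s - t|)
    (hBM : ∀ t ∈ Icc a b, ‖B t‖ ≤ M)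
    (u v : ℝ → EuclideanSpace ℝ (Fin m))
    (hu : Measurable u) (hv : Measurable v)
    (hbdd : ∃ C : ℝ, ∀ t ∈ Icc a b, ‖u t‖ ≤ C ∧ ‖v t‖ ≤ C)
    (ε : ℝ)
    (hclose : ∀ t ∈ Icc a b, ‖∫ s in a..t, (u s - v s)‖ ≤ ε)
    (x0 : EuclideanSpace ℝ (Fin n))
    (xu xv : ℝ → EuclideanSpace ℝ (Fin n))
    (hxuc : ContinuousOn xu (Icc a b)) (hxvc : ContinuousOn xv (Icc a b))
    (hxu : ∀ t ∈ Icc a b, xu t = x0 + ∫ s in a..t, (h s (xu s) + B s (u s)))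
    (hxv : ∀ t ∈ Icc a b, xv t = x0 + ∫ s in a..t, (h s (xv s) + B s (v s))) :
    ∀ t ∈ Icc a b,
      ‖xu t - xv t‖ ≤ (M + L_B * (b - a)) * ε * Real.exp (L * (b - a)) := by
  have hab' : a ≤ b := hab.le
  have haI : a ∈ Icc a b := left_mem_Icc.2 hab'
  have hbI : b ∈ Icc a b := right_mem_Icc.2 hab'
  have hε : 0 ≤ ε := by
    have := hclose a haI
    rwa [intervalIntegral.integral_same, norm_zero] at this
  have hM : 0 ≤ M := le_trans (norm_nonneg _) (hBM a haI)
  have hL_B : 0 ≤ L_B := by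
    have h0 := le_trans (norm_nonneg (B a - B b)) (hBLip a haI b hbI)
    have habs : 0 < |a - b| := by rw [abs_sub_comm, abs_of_pos (by linarith)]; linarith
    nlinarith
  have hδ0 : 0 ≤ (M + L_B * (b - a)) * ε :=
    mul_nonneg (by nlinarith) hε
  rcases Nat.eq_zero_or_pos n with hn | hn
  · subst hn
    haveI : Subsingleton (EuclideanSpace ℝ (Fin 0)) :=
      ⟨fun x y => PiLp.ext fun i => Fin.elim0 i⟩
    intro t _
    rw [Subsingleton.elim (xu t - xv t) 0, norm_zero]
    exact mul_nonneg hδ0 (Real.exp_pos _).le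
  -- n ≥ 1 : L is nonnegative
  have hL : 0 ≤ L := by
    have h1 := hLip a haI (EuclideanSpace.single (⟨0, hn⟩ : Fin n) (1:ℝ)) 0
    rw [sub_zero, EuclideanSpace.norm_single] at h1
    simpa using le_trans (norm_nonneg _) h1
  obtain ⟨C, hCbd⟩ := hbdd
  have hC : 0 ≤ C := le_trans (norm_nonneg _) (hCbd a haI).1
  set g : ℝ → EuclideanSpace ℝ (Fin m) := fun s => u s - v s with hgdef
  have hgb : ∀ s ∈ Icc a b, ‖g s‖ ≤ 2 * C := by
    intro s hs
    calc ‖g s‖ ≤ ‖u s‖ + ‖v s‖ := norm_sub_le _ _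
      _ ≤ 2 * C := by have := hCbd s hs; linarith [this.1, this.2]
  -- continuity of B on [a,b]
  have hBcont : ContinuousOn B (Icc a b) := by
    have : LipschitzOnWith (Real.toNNReal L_B) B (Icc a b) := by
      apply LipschitzOnWith.of_dist_le_mul
      intro x hx y hy
      rw [dist_eq_norm, dist_eq_norm]
      refine le_trans (hBLip x hx y hy) ?_
      have : |x - y| = ‖x - y‖ := rfl
      rw [this]
      gcongr
      exact le_max_left _ _
    exact this.continuousOn
  have hBmeas : AEStronglyMeasurable B (volume.restrict (Icc a b)) :=
    hBcont.aestronglyMeasurable measurableSet_Icc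
  have hII := fun (f : ℝ → EuclideanSpace ℝ (Fin n)) (K : ℝ) hm hb =>
    interval_integrable_of_bounded (a := a) (b := b) f K hm hb
  -- integrands
  have humeas : AEStronglyMeasurable u (volume.restrict (Icc a b)) :=
    hu.aestronglyMeasurable
  have hvmeas : AEStronglyMeasurable v (volume.restrict (Icc a b)) :=
    hv.aestronglyMeasurable
  have hgmeas : AEStronglyMeasurable g (volume.restrict (Icc a b)) := humeas.sub hvmeas
  have hBu_meas : AEStronglyMeasurable (fun s => B s (u s)) (volume.restrict (Icc a b)) :=
    isBoundedBilinearMap_apply.continuous.comp_aestronglyMeasurable (hBmeas.prodMk humeas)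
  have hBv_meas : AEStronglyMeasurable (fun s => B s (v s)) (volume.restrict (Icc a b)) :=
    isBoundedBilinearMap_apply.continuous.comp_aestronglyMeasurable (hBmeas.prodMk hvmeas)
  have h1u : ContinuousOn (fun s => h s (xu s)) (Icc a b) :=
    hcont.comp_continuousOn (continuousOn_id.prodMk hxuc)
  have h1v : ContinuousOn (fun s => h s (xv s)) (Icc a b) :=
    hcont.comp_continuousOn (continuousOn_id.prodMk hxvc)
  have hsub : ∀ c d : ℝ, c ∈ Icc a b → d ∈ Icc a b → uIcc c d ⊆ Icc a b := by
    intro c d hc hd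
    rw [uIcc]
    intro s hs
    exact ⟨le_trans (le_min hc.1 hd.1) hs.1, le_trans hs.2 (max_le hc.2 hd.2)⟩
  have hIhu : ∀ c d : ℝ, c ∈ Icc a b → d ∈ Icc a b →
      IntervalIntegrable (fun s => h s (xu s)) volume c d :=
    fun c d hc hd => (h1u.mono (hsub c d hc hd)).intervalIntegrable
  have hIhv : ∀ c d : ℝ, c ∈ Icc a b → d ∈ Icc a b →
      IntervalIntegrable (fun s => h s (xv s)) volume c d :=
    fun c d hc hd => (h1v.mono (hsub c d hc hd)).intervalIntegrable
  have hIBu : ∀ c d : ℝ, c ∈ Icc a b → d ∈ Icc a b →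
      IntervalIntegrable (fun s => B s (u s)) volume c d := by
    refine hII _ (M * C) hBu_meas ?_
    intro s hs
    exact le_trans ((B s).le_opNorm _)
      (mul_le_mul (hBM s hs) (hCbd s hs).1 (norm_nonneg _) hM)
  have hIBv : ∀ c d : ℝ, c ∈ Icc a b → d ∈ Icc a b →
      IntervalIntegrable (fun s => B s (v s)) volume c d := by
    refine hII _ (M * C) hBv_meas ?_
    intro s hs
    exact le_trans ((B s).le_opNorm _)
      (mul_le_mul (hBM s hs) (hCbd s hs).2 (norm_nonneg _) hM)
  have hIg : ∀ c d : ℝ, c ∈ Icc a b → d ∈ Icc a b → IntervalIntegrable g volume c d :=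
    interval_integrable_of_bounded g (2 * C) hgmeas hgb
  have hIBg : ∀ r ∈ Icc a b, ∀ c d : ℝ, c ∈ Icc a b → d ∈ Icc a b →
      IntervalIntegrable (fun s => (B s - B r) (g s)) volume c d := by
    intro r hr
    refine interval_integrable_of_bounded _ (L_B * (b - a) * (2 * C)) ?_ ?_
    · exact isBoundedBilinearMap_apply.continuous.comp_aestronglyMeasurable
        ((hBmeas.sub aestronglyMeasurable_const).prodMk hgmeas)
    · intro s hs
      have h1 : ‖B s - B r‖ ≤ L_B * (b - a) := by
        refine le_trans (hBLip s hs r hr) ?_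
        have : |s - r| ≤ b - a := by
          rw [abs_le]; constructor <;> [linarith [hs.1, hr.2]; linarith [hs.2, hr.1]]
        exact mul_le_mul_of_nonneg_left this hL_B
      exact le_trans ((B s - B r).le_opNorm _)
        (mul_le_mul h1 (hgb s hs) (norm_nonneg _) (mul_nonneg hL_B (by linarith)))
  -- clamped distance function
  set cl : ℝ → ℝ := fun s => max a (min s b) with hcldef
  have hclcont : Continuous cl := continuous_const.max (continuous_id.min continuous_const)
  have hclmem : ∀ s, cl s ∈ Icc a b :=
    fun s => ⟨le_max_left _ _, max_le hab' (min_le_right _ _)⟩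
  have hcleq : ∀ s ∈ Icc a b, cl s = s := by
    intro s hs
    simp only [hcldef]
    rw [min_eq_left hs.2, max_eq_right hs.1]
  set w : ℝ → EuclideanSpace ℝ (Fin n) := fun s => xu s - xv s with hwdef
  have hwcont : ContinuousOn w (Icc a b) := hxuc.sub hxvc
  set φ : ℝ → ℝ := fun s => ‖w (cl s)‖ with hφdef
  have hφcont : Continuous φ := (hwcont.comp_continuous hclcont hclmem).norm
  have hφeq : ∀ s ∈ Icc a b, φ s = ‖w s‖ := by
    intro s hs; simp only [hφdef]; rw [hcleq s hs]
  have hφ0 : ∀ s, 0 ≤ φ s := fun s => norm_nonneg _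
  set F : ℝ → ℝ := fun r => ∫ s in a..r, φ s with hFdef
  have hF' : ∀ r : ℝ, HasDerivAt F (φ r) r := by
    intro r
    exact intervalIntegral.integral_hasDerivAt_right
      (hφcont.intervalIntegrable _ _)
      (hφcont.stronglyMeasurableAtFilter _ _)
      hφcont.continuousAt
  have hFcont : Continuous F := by
    rw [continuous_iff_continuousAt]; exact fun r => (hF' r).continuousAt
  have hFnonneg : ∀ r ∈ Icc a b, 0 ≤ F r := by
    intro r hr
    exact intervalIntegral.integral_nonneg hr.1 (fun s _ => hφ0 s)
  set δ₀ : ℝ := (M + L_B * (b - a)) * ε with hδdef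
  -- the main integral inequality
  have hmain : ∀ r ∈ Icc a b, φ r ≤ L * F r + δ₀ := by
    intro r hr
    rw [hφeq r hr]
    -- decompose w r
    have hw1 : w r = (∫ s in a..r, (h s (xu s) - h s (xv s)))
        + ((∫ s in a..r, (B s - B r) (g s)) + B r (∫ s in a..r, g s)) := by
      have e1 : w r = ∫ s in a..r, ((h s (xu s) + B s (u s)) - (h s (xv s) + B s (v s))) := by
        rw [hwdef]
        simp only
        rw [hxu r hr, hxv r hr, add_sub_add_left_eq_sub,
          ← intervalIntegral.integral_sub ((hIhu a r haI hr).add (hIBu a r haI hr))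
            ((hIhv a r haI hr).add (hIBv a r haI hr))]
      have e2 : ∀ s : ℝ, (h s (xu s) + B s (u s)) - (h s (xv s) + B s (v s))
          = (h s (xu s) - h s (xv s)) + ((B s - B r) (g s) + (B r) (g s)) := by
        intro s
        simp only [hgdef, ContinuousLinearMap.sub_apply, map_sub]
        abel
      rw [e1]
      rw [intervalIntegral.integral_congr (fun s _ => e2 s)]
      rw [intervalIntegral.integral_add ((hIhu a r haI hr).sub (hIhv a r haI hr))
        (((hIBg r hr a r haI hr)).add ⟨(B r).integrable_comp (hIg a r haI hr).1,
          (B r).integrable_comp (hIg a r haI hr).2⟩)]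
      rw [intervalIntegral.integral_add (hIBg r hr a r haI hr)
        ⟨(B r).integrable_comp (hIg a r haI hr).1, (B r).integrable_comp (hIg a r haI hr).2⟩]
      rw [(B r).intervalIntegral_comp_comm (hIg a r haI hr)]
    have n1 : ‖∫ s in a..r, (h s (xu s) - h s (xv s))‖ ≤ L * F r := by
      refine le_trans (intervalIntegral.norm_integral_le_integral_norm hr.1) ?_
      have hmono : (∫ s in a..r, ‖h s (xu s) - h s (xv s)‖) ≤ ∫ s in a..r, L * φ s := by
        refine intervalIntegral.integral_mono_on hr.1 ?_ ?_ ?_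
        · exact (((h1u.sub h1v).mono (hsub a r haI hr)).norm).intervalIntegrable
        · exact (continuous_const.mul hφcont).intervalIntegrable _ _
        · intro s hs
          have hs' : s ∈ Icc a b := ⟨hs.1, le_trans hs.2 hr.2⟩
          rw [hφeq s hs']
          exact hLip s hs' _ _
      refine le_trans hmono ?_
      rw [intervalIntegral.integral_const_mul]
    have n2 : ‖∫ s in a..r, (B s - B r) (g s)‖ ≤ L_B * (b - a) * ε := by
      refine le_trans (key_estimate a b r hr.1 hr.2 B L_B hL_B hBLip g (2*C)
        (by linarith) hgb hIg (fun c d hc hd => hIBg r hr c d hc hd) ε hε hclose) ?_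
      exact mul_le_mul_of_nonneg_right
        (mul_le_mul_of_nonneg_left (by linarith [hr.2] : r - a ≤ b - a) hL_B) hε
    have n3 : ‖B r (∫ s in a..r, g s)‖ ≤ M * ε := by
      refine le_trans ((B r).le_opNorm _) ?_
      exact mul_le_mul (hBM r hr) (hclose r hr) (norm_nonneg _) hM
    calc ‖w r‖ ≤ ‖∫ s in a..r, (h s (xu s) - h s (xv s))‖
          + (‖∫ s in a..r, (B s - B r) (g s)‖ + ‖B r (∫ s in a..r, g s)‖) := by
          rw [hw1]; exact le_trans (norm_add_le _ _) (by gcongr; exact norm_add_le _ _)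
      _ ≤ L * F r + (L_B * (b - a) * ε + M * ε) := by
          exact add_le_add n1 (add_le_add n2 n3)
      _ = L * F r + δ₀ := by rw [hδdef]; ring
  -- Grönwall
  have hgron : ∀ x ∈ Icc a b, ‖F x‖ ≤ gronwallBound 0 L δ₀ (x - a) := by
    refine norm_le_gronwallBound_of_norm_deriv_right_le (f := F) (f' := φ)
      hFcont.continuousOn (fun x _ => (hF' x).hasDerivWithinAt) ?_ ?_
    · simp only [hFdef]
      rw [intervalIntegral.integral_same, norm_zero]
    · intro x hx
      have hx' : x ∈ Icc a b := ⟨hx.1, hx.2.le⟩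
      rw [Real.norm_of_nonneg (hφ0 x), Real.norm_of_nonneg (hFnonneg x hx')]
      exact hmain x hx'
  intro t ht
  have h1 : ‖xu t - xv t‖ = φ t := (hφeq t ht).symm
  rw [h1]
  have h2 : φ t ≤ L * F t + δ₀ := hmain t ht
  have h3 : F t ≤ gronwallBound 0 L δ₀ (t - a) := by
    have := hgron t ht
    rwa [Real.norm_of_nonneg (hFnonneg t ht)] at this
  have h4 : L * F t + δ₀ ≤ δ₀ * Real.exp (L * (b - a)) := by
    have h5 : L * F t ≤ L * gronwallBound 0 L δ₀ (t - a) :=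
      mul_le_mul_of_nonneg_left h3 hL
    by_cases hL0 : L = 0
    · subst hL0
      simp only [zero_mul, zero_add, Real.exp_zero, mul_one]
      exact le_refl _
    · have hLpos : 0 < L := lt_of_le_of_ne hL (Ne.symm hL0)
      rw [gronwallBound_of_K_ne_0 hL0] at h5
      have h6 : L * (0 * Real.exp (L * (t - a)) + δ₀ / L * (Real.exp (L * (t - a)) - 1)) + δ₀
          = δ₀ * Real.exp (L * (t - a)) := by
        field_simp
        ring
      have h7 : δ₀ * Real.exp (L * (t - a)) ≤ δ₀ * Real.exp (L * (b - a)) := by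
        have : Real.exp (L * (t - a)) ≤ Real.exp (L * (b - a)) := by
          apply Real.exp_le_exp.2
          have := ht.2
          nlinarith
        exact mul_le_mul_of_nonneg_left this hδ0
      linarith
  calc φ t ≤ L * F t + δ₀ := h2
    _ ≤ δ₀ * Real.exp (L * (b - a)) := h4
    _ = (M + L_B * (b - a)) * ε * Real.exp (L * (b - a)) := by rw [hδdef]
end
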